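/- Let n ≥ 1, d = 2^n. Let G ⊆ 𝒫ₙ be a set of n-qubit Pauli operators that contains the identity, is closed under matrix multiplication, is commutative, and has cardinality |G| = d. Then for every Q ∈ 𝒫ₙ the matrix M_G^Q := (1/d) Σ_{P∈G} (−1)^{P·Q} P is a Hermitian orthogonal projection ((M_G^Q)† = M_G^Q and (M_G^Q)² = M_G^Q) with tr(M_G^Q) = 1. -/

import Mathlib

open scoped Classical Matrix ComplexOrder

/-- The four single-qubit Pauli matrices `I, X, Y, Z`. -/
noncomputable def pauli1 : Fin 4 → Matrix (Fin 2) (Fin 2) ℂ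
  | 0 => !![1, 0; 0, 1]
  | 1 => !![0, 1; 1, 0]
  | 2 => !![0, -Complex.I; Complex.I, 0]
  | 3 => !![1, 0; 0, -1]

/-- The `n`-qubit Pauli operator `P_{f 0} ⊗ ⋯ ⊗ P_{f (n-1)}`, as a matrix indexed by
`Fin n → Fin 2` (a type of cardinality `d = 2^n`). -/
noncomputable def PauliOp (n : ℕ) (f : Fin n → Fin 4) :
    Matrix (Fin n → Fin 2) (Fin n → Fin 2) ℂ :=
  Matrix.of fun s t => ∏ i, pauli1 (f i) (s i) (t i)
/-- `(-1)^{P·Q}`: equals `1` if `P` and `Q` commute and `-1` otherwise. -/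
noncomputable def commSign {m : Type*} [Fintype m] (P Q : Matrix m m ℂ) : ℝ :=
  if P * Q = Q * P then 1 else -1

/-! ### Auxiliary lemmas -/

lemma pauli1_sq (a : Fin 4) : pauli1 a * pauli1 a = 1 := by
  fin_cases a <;>
    simp [pauli1, Matrix.mul_fin_two, Matrix.one_fin_two, Complex.I_mul_I]

lemma pauli1_star (a : Fin 4) (j k : Fin 2) : star (pauli1 a k j) = pauli1 a j k := by
  fin_cases a <;> fin_cases j <;> fin_cases k <;> simp [pauli1]

def psgn (a b : Fin 4) : ℂ := if a = 0 ∨ b = 0 ∨ a = b then 1 else -1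

lemma psgn_cases (a b : Fin 4) : psgn a b = 1 ∨ psgn a b = -1 := by
  unfold psgn; split <;> simp

lemma pauli1_mul_comm (a b : Fin 4) :
    pauli1 a * pauli1 b = psgn a b • (pauli1 b * pauli1 a) := by
  fin_cases a <;> fin_cases b <;>
    simp [pauli1, psgn, Matrix.mul_fin_two, Complex.I_mul_I]

lemma pauli1_trace_ne (a : Fin 4) (ha : a ≠ 0) : (pauli1 a).trace = 0 := by
  fin_cases a <;> simp_all [pauli1, Matrix.trace_fin_two]

lemma PauliOp_mul (n : ℕ) (f g : Fin n → Fin 4) :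
    PauliOp n f * PauliOp n g =
      Matrix.of fun s t => ∏ i, (pauli1 (f i) * pauli1 (g i)) (s i) (t i) := by
  ext s t
  simp only [Matrix.mul_apply, PauliOp, Matrix.of_apply]
  rw [Finset.prod_univ_sum, Fintype.piFinset_univ]
  exact Finset.sum_congr rfl fun u _ => (Finset.prod_mul_distrib).symm

lemma PauliOp_sq (n : ℕ) (f : Fin n → Fin 4) : PauliOp n f * PauliOp n f = 1 := by
  rw [PauliOp_mul]
  ext s t
  simp only [Matrix.of_apply, pauli1_sq]
  by_cases h : s = t
  · subst h; simp [Matrix.one_apply]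
  · rw [Matrix.one_apply_ne h]
    obtain ⟨i, hi⟩ := Function.ne_iff.mp h
    exact Finset.prod_eq_zero (Finset.mem_univ i) (by simp [Matrix.one_apply, hi])

lemma PauliOp_isUnit (n : ℕ) (f : Fin n → Fin 4) : IsUnit (PauliOp n f) :=
  ⟨⟨PauliOp n f, PauliOp n f, PauliOp_sq n f, PauliOp_sq n f⟩, rfl⟩

lemma PauliOp_mul_comm (n : ℕ) (f g : Fin n → Fin 4) :
    PauliOp n f * PauliOp n g =
      (∏ i, psgn (f i) (g i)) • (PauliOp n g * PauliOp n f) := by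
  rw [PauliOp_mul, PauliOp_mul]
  ext s t
  simp only [Matrix.of_apply, Matrix.smul_apply, smul_eq_mul]
  calc (∏ i, (pauli1 (f i) * pauli1 (g i)) (s i) (t i))
      = ∏ i, (psgn (f i) (g i) * (pauli1 (g i) * pauli1 (f i)) (s i) (t i)) := by
        refine Finset.prod_congr rfl fun i _ => ?_
        rw [pauli1_mul_comm (f i) (g i)]; simp
    _ = (∏ i, psgn (f i) (g i)) * ∏ i, (pauli1 (g i) * pauli1 (f i)) (s i) (t i) :=
        Finset.prod_mul_distrib

lemma prod_psgn_cases (n : ℕ) (f g : Fin n → Fin 4) :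
    (∏ i, psgn (f i) (g i)) = 1 ∨ (∏ i, psgn (f i) (g i)) = -1 := by
  refine Finset.prod_induction _ (fun x => x = 1 ∨ x = -1) ?_ (Or.inl rfl)
      fun i _ => psgn_cases (f i) (g i)
  rintro x y (rfl | rfl) (rfl | rfl) <;> norm_num

lemma PauliOp_conjTranspose (n : ℕ) (f : Fin n → Fin 4) :
    (PauliOp n f).conjTranspose = PauliOp n f := by
  ext s t
  simp only [Matrix.conjTranspose_apply, PauliOp, Matrix.of_apply, star_prod]
  exact Finset.prod_congr rfl fun i _ => pauli1_star (f i) (s i) (t i)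

lemma PauliOp_trace (n : ℕ) (f : Fin n → Fin 4) :
    (PauliOp n f).trace = ∏ i, (pauli1 (f i)).trace := by
  simp only [Matrix.trace, Matrix.diag, PauliOp, Matrix.of_apply]
  rw [Finset.prod_univ_sum, Fintype.piFinset_univ]

lemma PauliOp_zero (n : ℕ) (f : Fin n → Fin 4) (hf : ∀ i, f i = 0) : PauliOp n f = 1 := by
  have : PauliOp n f * PauliOp n f = PauliOp n f := by
    rw [PauliOp_mul]
    ext s t
    simp only [Matrix.of_apply, PauliOp]
    exact Finset.prod_congr rfl fun i _ => by rw [hf i]; simp [pauli1, Matrix.mul_fin_two]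
  calc PauliOp n f = PauliOp n f * (PauliOp n f * PauliOp n f) := by rw [PauliOp_sq, mul_one]
    _ = 1 := by rw [this, PauliOp_sq]

/-- If `M * Q = ε • (Q * M)` with `ε = ±1` and `M * Q ≠ 0`, then `commSign M Q = ε`. -/
lemma commSign_of {m : Type*} [Fintype m] (M Q : Matrix m m ℂ) (ε : ℂ)
    (hε : ε = 1 ∨ ε = -1) (h : M * Q = ε • (Q * M)) (hne : M * Q ≠ 0) :
    (commSign M Q : ℂ) = ε := by
  rcases hε with rfl | rfl
  · rw [one_smul] at h
    simp [commSign, h]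
  · have hne' : ¬ M * Q = Q * M := by
      intro hcm
      apply hne
      have hthis : M * Q = -(M * Q) := by
        calc M * Q = (-1 : ℂ) • (Q * M) := h
          _ = -(Q * M) := by simp
          _ = -(M * Q) := by rw [hcm]
      have h2 : M * Q + M * Q = 0 := eq_neg_iff_add_eq_zero.mp hthis
      rw [← two_smul ℂ] at h2
      simpa using (smul_eq_zero.mp h2).resolve_left (by norm_num)
    simp [commSign, hne']

lemma commSign_cases {m : Type*} [Fintype m] (M Q : Matrix m m ℂ) :
    ((commSign M Q : ℂ)) = 1 ∨ ((commSign M Q : ℂ)) = -1 := by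
  unfold commSign; split <;> simp

/-- if `G ⊆ 𝒫ₙ` contains the identity, is closed under multiplication,
is commutative and has cardinality `d = 2^n`, then for every `Q ∈ 𝒫ₙ` the matrix
`M_G^Q = (1/d) ∑_{P ∈ G} (−1)^{P·Q} P` is a Hermitian orthogonal projection of trace `1`. -/
theorem stmt_18 (n : ℕ) (hn : 1 ≤ n)
    (G : Finset (Matrix (Fin n → Fin 2) (Fin n → Fin 2) ℂ))
    (hG : ∀ P ∈ G, ∃ f : Fin n → Fin 4, P = PauliOp n f)
    (h1 : (1 : Matrix (Fin n → Fin 2) (Fin n → Fin 2) ℂ) ∈ G)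
    (hmul : ∀ P ∈ G, ∀ Q ∈ G, P * Q ∈ G)
    (hcomm : ∀ P ∈ G, ∀ Q ∈ G, P * Q = Q * P)
    (hcard : G.card = 2 ^ n)
    (Q : Fin n → Fin 4) :
    ((2 ^ n : ℂ)⁻¹ • ∑ P ∈ G, (commSign P (PauliOp n Q) : ℂ) • P).conjTranspose =
      (2 ^ n : ℂ)⁻¹ • ∑ P ∈ G, (commSign P (PauliOp n Q) : ℂ) • P ∧
    ((2 ^ n : ℂ)⁻¹ • ∑ P ∈ G, (commSign P (PauliOp n Q) : ℂ) • P) *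
        ((2 ^ n : ℂ)⁻¹ • ∑ P ∈ G, (commSign P (PauliOp n Q) : ℂ) • P) =
      (2 ^ n : ℂ)⁻¹ • ∑ P ∈ G, (commSign P (PauliOp n Q) : ℂ) • P ∧
    ((2 ^ n : ℂ)⁻¹ • ∑ P ∈ G, (commSign P (PauliOp n Q) : ℂ) • P).trace = 1 := by
  set Q₀ := PauliOp n Q with hQ₀
  set c : Matrix (Fin n → Fin 2) (Fin n → Fin 2) ℂ → ℂ :=
    fun P => (commSign P Q₀ : ℂ) with hc
  set S := ∑ P ∈ G, c P • P with hS
  have hd : (2 ^ n : ℂ) ≠ 0 := by positivity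
  -- every element of G squares to 1 and is a unit
  have hsq : ∀ P ∈ G, P * P = 1 := by
    intro P hP
    obtain ⟨f, rfl⟩ := hG P hP
    exact PauliOp_sq n f
  have hunit : ∀ P ∈ G, IsUnit P := fun P hP => ⟨⟨P, P, hsq P hP, hsq P hP⟩, rfl⟩
  -- c is multiplicative on G
  have hεQ : ∀ f : Fin n → Fin 4, ∃ ε : ℂ, (ε = 1 ∨ ε = -1) ∧
      PauliOp n f * Q₀ = ε • (Q₀ * PauliOp n f) :=
    fun f => ⟨∏ i, psgn (f i) (Q i), prod_psgn_cases n f Q, PauliOp_mul_comm n f Q⟩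
  have hQ₀unit : IsUnit Q₀ := PauliOp_isUnit n Q
  have hcval : ∀ P ∈ G, ∃ ε : ℂ, (ε = 1 ∨ ε = -1) ∧ P * Q₀ = ε • (Q₀ * P) ∧ c P = ε := by
    intro P hP
    obtain ⟨f, rfl⟩ := hG P hP
    obtain ⟨ε, hε1, hε2⟩ := hεQ f
    refine ⟨ε, hε1, hε2, commSign_of _ _ ε hε1 hε2 ?_⟩
    exact (hunit _ hP).mul hQ₀unit |>.ne_zero
  have hcmul : ∀ P ∈ G, ∀ P' ∈ G, c (P * P') = c P * c P' := by
    intro P hP P' hP'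
    obtain ⟨ε, hε1, hε2, hε3⟩ := hcval P hP
    obtain ⟨ε', hε1', hε2', hε3'⟩ := hcval P' hP'
    obtain ⟨ε'', hε1'', hε2'', hε3''⟩ := hcval (P * P') (hmul P hP P' hP')
    have key : (P * P') * Q₀ = (ε * ε') • (Q₀ * (P * P')) := by
      calc (P * P') * Q₀ = P * (P' * Q₀) := by rw [mul_assoc]
        _ = P * (ε' • (Q₀ * P')) := by rw [hε2']
        _ = ε' • (P * Q₀ * P') := by rw [mul_smul_comm, mul_assoc]
        _ = ε' • ((ε • (Q₀ * P)) * P') := by rw [hε2]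
        _ = (ε * ε') • (Q₀ * (P * P')) := by
            rw [Matrix.smul_mul]; rw [smul_smul, mul_comm ε' ε, mul_assoc]
    have hne : (P * P') * Q₀ ≠ 0 :=
      (((hunit P hP).mul (hunit P' hP')).mul hQ₀unit).ne_zero
    have : c (P * P') = ε * ε' := by
      rw [hc]
      exact commSign_of _ _ _ (by rcases hε1 with rfl|rfl <;> rcases hε1' with rfl|rfl <;>
        norm_num) key hne
    rw [this, hε3, hε3']
  have hcsq : ∀ P ∈ G, c P * c P = 1 := by
    intro P hP
    rcases commSign_cases P Q₀ with h | h <;> rw [hc] <;> simp only [h] <;> norm_num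
  have hc1 : c 1 = 1 := by
    have : (1 : Matrix (Fin n → Fin 2) (Fin n → Fin 2) ℂ) * Q₀ = Q₀ * 1 := by
      rw [one_mul, mul_one]
    simp [hc, commSign, this]
  -- Hermitian
  have herm : S.conjTranspose = S := by
    rw [hS, Matrix.conjTranspose_sum]
    refine Finset.sum_congr rfl fun P hP => ?_
    obtain ⟨f, rfl⟩ := hG P hP
    rw [Matrix.conjTranspose_smul, PauliOp_conjTranspose]
    congr 1
    rcases commSign_cases (PauliOp n f) Q₀ with h | h <;>
      simp only [hc] <;> rw [show ∀ z : ℂ, star z = (starRingEnd ℂ) z from fun _ => rfl] <;>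
      rw [Complex.conj_ofReal]
  -- S * S = 2^n • S
  have hSS : S * S = (2 ^ n : ℂ) • S := by
    rw [hS, Finset.sum_mul_sum]
    have inner : ∀ P' ∈ G, (∑ P ∈ G, (c P • P) * (c P' • P')) = S := by
      intro P' hP'
      have hbij : ∀ R ∈ G, R * P' ∈ G := fun R hR => hmul R hR P' hP'
      rw [show (∑ P ∈ G, (c P • P) * (c P' • P')) = ∑ R ∈ G, (c (R * P') • (R * P')) * (c P' • P') from
        (Finset.sum_nbij' (fun P => P * P') (fun R => R * P') hbij hbij
          (fun P hP => by rw [mul_assoc, hsq P' hP', mul_one])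
          (fun R hR => by rw [mul_assoc, hsq P' hP', mul_one])
          (fun P hP => rfl)).symm]
      refine Finset.sum_congr rfl fun R hR => ?_
      rw [hcmul R hR P' hP', smul_mul_smul_comm, mul_assoc (c R), hcsq P' hP', mul_one,
        mul_assoc, hsq P' hP', mul_one]
    rw [Finset.sum_comm]
    rw [Finset.sum_congr rfl inner]
    rw [Finset.sum_const, hcard, ← hS]
    rw [← Nat.cast_smul_eq_nsmul ℂ]
    norm_num
  -- trace
  have htr : S.trace = (2 ^ n : ℂ) := by
    rw [hS, Matrix.trace_sum]
    rw [Finset.sum_eq_single_of_mem 1 h1]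
    · rw [Matrix.trace_smul, hc1, Matrix.trace_one, one_smul]
      simp [Fintype.card_pi]
    · intro P hP hPne
      obtain ⟨f, rfl⟩ := hG P hP
      rw [Matrix.trace_smul, PauliOp_trace]
      have : ∃ i, f i ≠ 0 := by
        by_contra hno
        push_neg at hno
        exact hPne (PauliOp_zero n f hno)
      obtain ⟨i, hi⟩ := this
      rw [Finset.prod_eq_zero (Finset.mem_univ i) (pauli1_trace_ne (f i) hi), smul_zero]
  refine ⟨?_, ?_, ?_⟩
  · rw [Matrix.conjTranspose_smul, herm]
    congr 1
    rw [show ∀ z : ℂ, star z = (starRingEnd ℂ) z from fun _ => rfl]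
    rw [map_inv₀, map_pow, Complex.conj_ofNat]
  · rw [Matrix.smul_mul, Matrix.mul_smul, smul_smul, hSS, smul_smul]
    congr 1
    field_simp
  · rw [Matrix.trace_smul, htr, smul_eq_mul, inv_mul_cancel₀ hd]
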